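/- arXiv:1704.01781 — 2 statements merged into one kernel-verified Lean document; each statement's English description precedes it below -/
import Mathlib

section
/- Let X and Y be Banach spaces, U ⊂ X open, and F : U → Y a C¹ map. Let x₀ ∈ U and suppose dF(x₀) admits a bounded right inverse Q with ‖Q‖ ≤ c₀ for some c₀ > 0. Suppose η > 0 is such that the ball B(x₀, η) ⊂ U and ‖dF(x) − dF(x₀)‖ ≤ 1/(2c₀) for all x with ‖x − x₀‖ < η. If ‖F(x₀)‖ < η/(4c₀), then there exists x ∈ U with F(x) = 0 and ‖x − x₀‖ ≤ 2c₀‖F(x₀)‖. -/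
open Metric

/-- **Newton–Picard quantitative implicit function theorem**
(McDuff–Salamon, Proposition A.3.4).  Let `X, Y` be Banach spaces, `U ⊆ X` open,
`F : U → Y` of class `C¹`, `x₀ ∈ U`.  If `dF(x₀)` admits a bounded right inverse `Q`
with `‖Q‖ ≤ c₀`, `η > 0` is such that `B(x₀, η) ⊆ U` and
`‖dF(x) - dF(x₀)‖ ≤ 1/(2c₀)` for `‖x - x₀‖ < η`, and `‖F(x₀)‖ < η/(4c₀)`, then there
exists `x ∈ U` with `F(x) = 0` and `‖x - x₀‖ ≤ 2c₀‖F(x₀)‖`. -/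
theorem newton_picard
    {X Y : Type*} [NormedAddCommGroup X] [NormedSpace ℝ X] [CompleteSpace X]
    [NormedAddCommGroup Y] [NormedSpace ℝ Y] [CompleteSpace Y]
    (U : Set X) (hU : IsOpen U) (F : X → Y) (dF : X → X →L[ℝ] Y)
    (hC1 : ∀ x ∈ U, HasFDerivAt F (dF x) x) (hdFcont : ContinuousOn dF U)
    (x₀ : X) (hx₀ : x₀ ∈ U)
    (Q : Y →L[ℝ] X) (hQ : (dF x₀).comp Q = ContinuousLinearMap.id ℝ Y)
    (c₀ : ℝ) (hc₀ : 0 < c₀) (hQn : ‖Q‖ ≤ c₀)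
    (η : ℝ) (hη : 0 < η) (hball : ball x₀ η ⊆ U)
    (hlip : ∀ x, ‖x - x₀‖ < η → ‖dF x - dF x₀‖ ≤ 1 / (2 * c₀))
    (hF : ‖F x₀‖ < η / (4 * c₀)) :
    ∃ x ∈ U, F x = 0 ∧ ‖x - x₀‖ ≤ 2 * c₀ * ‖F x₀‖ := by
  set b := ‖F x₀‖ with hb
  have hb0 : 0 ≤ b := norm_nonneg _
  have hlt : 2 * c₀ * b < η := by
    have : 2 * c₀ * b < 2 * c₀ * (η / (4 * c₀)) := by
      apply mul_lt_mul_of_pos_left hF; positivity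
    calc 2 * c₀ * b < 2 * c₀ * (η / (4 * c₀)) := this
      _ = η / 2 := by field_simp; ring
      _ < η := by linarith
  have hQinv : ∀ v : Y, dF x₀ (Q v) = v := by
    intro v
    have := ContinuousLinearMap.ext_iff.mp hQ v
    simpa using this
  -- mean value estimate
  have hmvt : ∀ p ∈ ball x₀ η, ∀ q ∈ ball x₀ η,
      ‖F q - F p - dF x₀ (q - p)‖ ≤ 1 / (2 * c₀) * ‖q - p‖ := by
    intro p hp q hq
    have key := (convex_ball x₀ η).norm_image_sub_le_of_norm_hasFDerivWithin_le
      (f := fun z => F z - dF x₀ z) (f' := fun z => dF z - dF x₀)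
      (fun z hz => (((hC1 z (hball hz)).sub (dF x₀).hasFDerivAt).hasFDerivWithinAt))
      (fun z hz => by
        have : ‖z - x₀‖ < η := by rw [← dist_eq_norm]; exact mem_ball.mp hz
        exact hlip z this) hp hq
    have heq : F q - dF x₀ q - (F p - dF x₀ p) = F q - F p - dF x₀ (q - p) := by
      rw [map_sub]; abel
    rw [heq] at key
    exact key
  -- the Newton iteration
  let x : ℕ → X := fun n => Nat.rec x₀ (fun _ xn => xn - Q (F xn)) n
  have hx0 : x 0 = x₀ := rfl
  have hxs : ∀ n, x (n + 1) = x n - Q (F (x n)) := fun n => rfl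
  have claim : ∀ n, ‖x n - x₀‖ ≤ 2 * c₀ * b * (1 - (1/2)^n) ∧
      ‖F (x n)‖ ≤ (1/2)^n * b := by
    intro n
    induction n with
    | zero => constructor <;> simp [hx0, hb]
    | succ n ih =>
      obtain ⟨ih1, ih2⟩ := ih
      have hhalf : (0:ℝ) < (1/2:ℝ)^n := by positivity
      have hhalf1 : (1/2:ℝ)^n ≤ 1 := pow_le_one₀ (by norm_num) (by norm_num)
      have hstep : ‖x (n+1) - x n‖ ≤ c₀ * ((1/2)^n * b) := by
        rw [hxs n]
        have : x n - Q (F (x n)) - x n = -(Q (F (x n))) := by abel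
        rw [this, norm_neg]
        calc ‖Q (F (x n))‖ ≤ ‖Q‖ * ‖F (x n)‖ := Q.le_opNorm _
          _ ≤ c₀ * ((1/2)^n * b) :=
            mul_le_mul hQn ih2 (norm_nonneg _) hc₀.le
      have hxn_ball : x n ∈ ball x₀ η := by
        rw [mem_ball, dist_eq_norm]
        calc ‖x n - x₀‖ ≤ 2 * c₀ * b * (1 - (1/2)^n) := ih1
          _ ≤ 2 * c₀ * b * 1 := by
              apply mul_le_mul_of_nonneg_left (by linarith) (by positivity)
          _ = 2 * c₀ * b := mul_one _
          _ < η := hlt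
      have h1 : ‖x (n+1) - x₀‖ ≤ 2 * c₀ * b * (1 - (1/2)^(n+1)) := by
        calc ‖x (n+1) - x₀‖ = ‖(x (n+1) - x n) + (x n - x₀)‖ := by rw [sub_add_sub_cancel]
          _ ≤ ‖x (n+1) - x n‖ + ‖x n - x₀‖ := norm_add_le _ _
          _ ≤ c₀ * ((1/2)^n * b) + 2 * c₀ * b * (1 - (1/2)^n) := add_le_add hstep ih1
          _ = 2 * c₀ * b * (1 - (1/2)^(n+1)) := by ring
      have hxn1_ball : x (n+1) ∈ ball x₀ η := by
        rw [mem_ball, dist_eq_norm]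
        calc ‖x (n+1) - x₀‖ ≤ 2 * c₀ * b * (1 - (1/2)^(n+1)) := h1
          _ ≤ 2 * c₀ * b * 1 := by
              apply mul_le_mul_of_nonneg_left _ (by positivity)
              have : (0:ℝ) < (1/2:ℝ)^(n+1) := by positivity
              linarith
          _ = 2 * c₀ * b := mul_one _
          _ < η := hlt
      refine ⟨h1, ?_⟩
      have hdiff : dF x₀ (x (n+1) - x n) = -(F (x n)) := by
        rw [hxs n]
        have : x n - Q (F (x n)) - x n = -(Q (F (x n))) := by abel
        rw [this, map_neg, hQinv]
      have := hmvt (x n) hxn_ball (x (n+1)) hxn1_ball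
      rw [hdiff] at this
      have heq : F (x (n+1)) - F (x n) - -(F (x n)) = F (x (n+1)) := by abel
      rw [heq] at this
      calc ‖F (x (n+1))‖ ≤ 1 / (2 * c₀) * ‖x (n+1) - x n‖ := this
        _ ≤ 1 / (2 * c₀) * (c₀ * ((1/2)^n * b)) := by
            apply mul_le_mul_of_nonneg_left hstep (by positivity)
        _ = (1/2)^(n+1) * b := by field_simp; ring
  -- Cauchy sequence
  have hcauchy : CauchySeq x := by
    apply cauchySeq_of_le_geometric (1/2) (c₀ * b) (by norm_num)
    intro n
    rw [dist_eq_norm]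
    have : x n - x (n+1) = -(x (n+1) - x n) := by abel
    rw [this, norm_neg]
    have hstep : ‖x (n+1) - x n‖ ≤ c₀ * ((1/2)^n * b) := by
      rw [hxs n]
      have : x n - Q (F (x n)) - x n = -(Q (F (x n))) := by abel
      rw [this, norm_neg]
      calc ‖Q (F (x n))‖ ≤ ‖Q‖ * ‖F (x n)‖ := Q.le_opNorm _
        _ ≤ c₀ * ((1/2)^n * b) :=
          mul_le_mul hQn (claim n).2 (norm_nonneg _) hc₀.le
    calc ‖x (n+1) - x n‖ ≤ c₀ * ((1/2)^n * b) := hstep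
      _ = c₀ * b * (1/2)^n := by ring
  obtain ⟨a, ha⟩ := cauchySeq_tendsto_of_complete hcauchy
  have hdist : ‖a - x₀‖ ≤ 2 * c₀ * b := by
    have hlim : Filter.Tendsto (fun n => ‖x n - x₀‖) Filter.atTop
        (nhds ‖a - x₀‖) := ((ha.sub_const x₀).norm)
    apply le_of_tendsto hlim
    filter_upwards with n
    calc ‖x n - x₀‖ ≤ 2 * c₀ * b * (1 - (1/2)^n) := (claim n).1
      _ ≤ 2 * c₀ * b * 1 := by
          apply mul_le_mul_of_nonneg_left _ (by positivity)
          have : (0:ℝ) < (1/2:ℝ)^n := by positivity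
          linarith
      _ = 2 * c₀ * b := mul_one _
  have haU : a ∈ U := hball (by rw [mem_ball, dist_eq_norm]; linarith)
  refine ⟨a, haU, ?_, hdist⟩
  -- F a = 0
  have hFcont : ContinuousAt F a := (hC1 a haU).continuousAt
  have h1 : Filter.Tendsto (fun n => F (x n)) Filter.atTop (nhds (F a)) :=
    hFcont.tendsto.comp ha
  have h2 : Filter.Tendsto (fun n => F (x n)) Filter.atTop (nhds 0) := by
    apply squeeze_zero_norm (fun n => (claim n).2)
    have := (tendsto_pow_atTop_nhds_zero_of_lt_one (by norm_num : (0:ℝ) ≤ 1/2)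
      (by norm_num : (1/2:ℝ) < 1)).mul_const b
    simpa using this
  exact tendsto_nhds_unique h1 h2
end

section
/- Let b₀ = 1 and b_k = ∏_{j=1}^{k} ((j−1)(2j−3) − 3)/(3(2j−1)j). Then the function ψ₂(ζ) = ∑_{k=0}^∞ b_k ζ^{2k} ζ̄^{2k} = ∑_{k=0}^∞ b_k |ζ|^{4k}, which converges on the unit disc, satisfies ∂²ψ₂/∂ζ̄² = (6ζ²/(ζ²ζ̄² − 3)) ψ₂ on Δ. -/
open Complex

/-- The Wirtinger derivative `∂f/∂ζ̄ = (1/2)(∂f/∂x + i ∂f/∂y)`. -/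
noncomputable def dbar (f : ℂ → ℂ) (z : ℂ) : ℂ :=
  (2⁻¹ : ℂ) * (fderiv ℝ f z 1 + Complex.I * fderiv ℝ f z Complex.I)

/-- The coefficient sequence `b_k = ∏_{j=1}^k ((j-1)(2j-3) - 3)/(3(2j-1)j)`, `b₀ = 1`. -/
noncomputable def bSeq (k : ℕ) : ℝ :=
  ∏ j ∈ Finset.Icc 1 k,
    (((j : ℝ) - 1) * (2 * (j : ℝ) - 3) - 3) / (3 * (2 * (j : ℝ) - 1) * (j : ℝ))

/-- The second particular solution `ψ₂(ζ) = ∑_{k=0}^∞ b_k ζ^{2k} ζ̄^{2k}`. -/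
noncomputable def psiTwo (ζ : ℂ) : ℂ :=
  ∑' k : ℕ, (bSeq k : ℂ) * ζ ^ (2 * k) * (starRingEnd ℂ ζ) ^ (2 * k)

/-! Write `ψ₂(ζ) = F(ζζ̄)` with `F(w) = ∑ bₖ w^{2k}`; since `|bₖ| ≤ 3^{1-k}`, `F` is holomorphic
on the unit disc and may be differentiated termwise. As `ζ` is holomorphic and
`∂(ζζ̄)/∂ζ̄ = ζ`, the chain rule gives `∂ψ₂/∂ζ̄ = ζ F'(ζζ̄)` and `∂²ψ₂/∂ζ̄² = ζ² F''(ζζ̄)`, so the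
claim reduces to the ODE `(w² - 3) F''(w) = 6 F(w)`, whose coefficient form is the recurrence
satisfied by `bₖ`. -/

open Filter Topology ComplexConjugate

section PowerSeries

variable {𝕜 : Type*} [RCLike 𝕜]

lemma summable_mul_pow_of_summable_norm {a : ℕ → 𝕜} (ha : Summable fun k => ‖a k‖)
    (e : ℕ → ℕ) {w : 𝕜} (hw : ‖w‖ ≤ 1) : Summable fun k => a k * w ^ e k :=
  ha.of_norm_bounded fun k => by
    rw [norm_mul, norm_pow]
    exact mul_le_of_le_one_right (norm_nonneg _) (pow_le_one₀ (norm_nonneg w) hw)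

lemma hasDerivAt_tsum_mul_pow {a : ℕ → 𝕜} {e : ℕ → ℕ} (ha : Summable fun k => ‖a k‖)
    (hae : Summable fun k => ‖a k * e k‖) {w : 𝕜} (hw : ‖w‖ < 1) :
    HasDerivAt (fun z => ∑' k, a k * z ^ e k) (∑' k, a k * e k * w ^ (e k - 1)) w := by
  have hball : ∀ {z : 𝕜}, z ∈ Metric.ball (0 : 𝕜) 1 ↔ ‖z‖ < 1 := mem_ball_zero_iff
  refine hasDerivAt_tsum_of_isPreconnected (g := fun k z => a k * z ^ e k)
    (g' := fun k z => a k * e k * z ^ (e k - 1)) hae Metric.isOpen_ball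
    (convex_ball (0 : 𝕜) 1).isPreconnected (fun k z _ => ?_) (fun k z hz => ?_)
    (Metric.mem_ball_self one_pos) (summable_mul_pow_of_summable_norm ha e (by simp))
    (hball.mpr hw)
  · simpa [mul_assoc] using (hasDerivAt_pow (e k) z).const_mul (a k)
  · rw [norm_mul, norm_pow]
    exact mul_le_of_le_one_right (norm_nonneg _)
      (pow_le_one₀ (norm_nonneg z) (hball.mp hz).le)

end PowerSeries

section Coefficients

lemma bSeq_zero : bSeq 0 = 1 := by simp [bSeq]

lemma bSeq_succ (k : ℕ) :
    bSeq (k + 1) = bSeq k * ((k : ℝ) * (2 * k - 1) - 3) / (3 * (2 * k + 1) * (k + 1)) := by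
  rw [bSeq, bSeq, Finset.prod_Icc_succ_top (Nat.le_add_left 1 k)]
  push_cast
  ring

/-- `|bₖ₊₁ / bₖ| ≤ 1/3` from `k = 1` on, while `b₁ = -1`. -/
lemma abs_bSeq_le : ∀ k, |bSeq k| ≤ 3 * (1 / 3 : ℝ) ^ k
  | 0 => by norm_num [bSeq_zero]
  | 1 => by norm_num [bSeq_succ, bSeq_zero]
  | k + 2 => by
    have hden : (0 : ℝ) < 3 * (2 * (k + 1 : ℕ) + 1) * ((k + 1 : ℕ) + 1) := by positivity
    have hratio : |((k + 1 : ℕ) : ℝ) * (2 * (k + 1 : ℕ) - 1) - 3| /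
        (3 * (2 * (k + 1 : ℕ) + 1) * ((k + 1 : ℕ) + 1)) ≤ 1 / 3 := by
      rw [div_le_iff₀ hden, abs_le]
      push_cast
      constructor <;> nlinarith [sq_nonneg (k : ℝ)]
    rw [bSeq_succ, mul_div_assoc, abs_mul, abs_div, abs_of_pos hden]
    calc |bSeq (k + 1)| * _ ≤ 3 * (1 / 3 : ℝ) ^ (k + 1) * (1 / 3) :=
          mul_le_mul (abs_bSeq_le (k + 1)) hratio (by positivity) (by positivity)
      _ = 3 * (1 / 3 : ℝ) ^ (k + 2) := by ring

lemma summable_abs_bSeq_mul_pow (p : ℕ) : Summable fun k => |bSeq k| * (k : ℝ) ^ p := by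
  refine ((summable_pow_mul_geometric_of_norm_lt_one p (r := (1 / 3 : ℝ)) (by norm_num)).mul_left
    3).of_nonneg_of_le (fun k => by positivity) fun k => ?_
  calc |bSeq k| * (k : ℝ) ^ p ≤ 3 * (1 / 3 : ℝ) ^ k * (k : ℝ) ^ p :=
        mul_le_mul_of_nonneg_right (abs_bSeq_le k) (by positivity)
    _ = 3 * ((k : ℝ) ^ p * (1 / 3 : ℝ) ^ k) := by ring

/-- With `dₖ = bₖ (2k)(2k-1)`, the coefficients of `bSeriesDeriv2`, this is the coefficient form of
`(w² - 3) F''(w) = 6 F(w)`. -/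
lemma bSeq_recurrence (k : ℕ) :
    bSeq k * (2 * k) * (2 * k - 1) -
      3 * (bSeq (k + 1) * (2 * (k + 1 : ℕ)) * (2 * (k + 1 : ℕ) - 1)) = 6 * bSeq k := by
  rw [bSeq_succ]
  push_cast
  field_simp
  ring

end Coefficients

section Series

noncomputable def bSeries (w : ℂ) : ℂ := ∑' k, (bSeq k : ℂ) * w ^ (2 * k)

noncomputable def bSeriesDeriv (w : ℂ) : ℂ :=
  ∑' k, (bSeq k : ℂ) * ((2 * k : ℕ) : ℂ) * w ^ (2 * k - 1)

noncomputable def bSeriesDeriv2 (w : ℂ) : ℂ :=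
  ∑' k, ((bSeq k * (2 * k) * (2 * k - 1) : ℝ) : ℂ) * w ^ (2 * k - 2)

lemma summable_norm_bSeq : Summable fun k => ‖(bSeq k : ℂ)‖ := by
  simpa using summable_abs_bSeq_mul_pow 0

lemma summable_norm_bSeq_mul_two_mul : Summable fun k => ‖(bSeq k : ℂ) * ((2 * k : ℕ) : ℂ)‖ :=
  ((summable_abs_bSeq_mul_pow 1).mul_left 2).congr fun k => by
    rw [norm_mul, norm_real, Real.norm_eq_abs, Complex.norm_natCast]
    push_cast
    ring

lemma summable_norm_bSeq_mul_two_mul_mul :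
    Summable fun k => ‖((bSeq k * (2 * k) * (2 * k - 1) : ℝ) : ℂ)‖ := by
  refine ((summable_abs_bSeq_mul_pow 2).mul_left 4).of_nonneg_of_le (fun k => norm_nonneg _)
    fun k => ?_
  rw [norm_real, Real.norm_eq_abs, mul_assoc, abs_mul]
  have hk : |2 * (k : ℝ) * (2 * k - 1)| ≤ 4 * (k : ℝ) ^ 2 := by
    have hk2 : (k : ℝ) ≤ k ^ 2 := by exact_mod_cast Nat.le_self_pow two_ne_zero k
    rw [abs_le]
    constructor <;> nlinarith
  nlinarith [abs_nonneg (bSeq k)]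

lemma natCast_two_mul_mul_natCast_sub_one (k : ℕ) :
    ((2 * k : ℕ) : ℂ) * ((2 * k - 1 : ℕ) : ℂ) = 2 * k * (2 * k - 1) := by
  rcases k with _ | m
  · simp
  · rw [show 2 * (m + 1) - 1 = 2 * m + 1 by omega]
    push_cast
    ring

lemma hasDerivAt_bSeries {w : ℂ} (hw : ‖w‖ < 1) : HasDerivAt bSeries (bSeriesDeriv w) w :=
  hasDerivAt_tsum_mul_pow summable_norm_bSeq summable_norm_bSeq_mul_two_mul hw

lemma hasDerivAt_bSeriesDeriv {w : ℂ} (hw : ‖w‖ < 1) :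
    HasDerivAt bSeriesDeriv (bSeriesDeriv2 w) w := by
  have hcoeff : ∀ k, (bSeq k : ℂ) * ((2 * k : ℕ) : ℂ) * ((2 * k - 1 : ℕ) : ℂ) =
      ((bSeq k * (2 * k) * (2 * k - 1) : ℝ) : ℂ) := fun k => by
    rw [mul_assoc, natCast_two_mul_mul_natCast_sub_one]
    push_cast
    ring
  refine (hasDerivAt_tsum_mul_pow (e := fun k => 2 * k - 1) summable_norm_bSeq_mul_two_mul
    (by simpa only [hcoeff] using summable_norm_bSeq_mul_two_mul_mul) hw).congr_deriv ?_
  refine tsum_congr fun k => ?_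
  rw [hcoeff, show 2 * k - 1 - 1 = 2 * k - 2 by omega]

lemma bSeries_ode {w : ℂ} (hw : ‖w‖ < 1) : (w ^ 2 - 3) * bSeriesDeriv2 w = 6 * bSeries w := by
  set d : ℕ → ℂ := fun k => ((bSeq k * (2 * k) * (2 * k - 1) : ℝ) : ℂ) with hd
  have hd0 : d 0 = 0 := by simp [hd]
  have hF : HasSum (fun k => (bSeq k : ℂ) * w ^ (2 * k)) (bSeries w) :=
    (summable_mul_pow_of_summable_norm summable_norm_bSeq _ hw.le).hasSum
  have hF2 : HasSum (fun k => d k * w ^ (2 * k - 2)) (bSeriesDeriv2 w) :=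
    (summable_mul_pow_of_summable_norm summable_norm_bSeq_mul_two_mul_mul _ hw.le).hasSum
  have hw2F2 : HasSum (fun k => d k * w ^ (2 * k)) (w ^ 2 * bSeriesDeriv2 w) := by
    have hterm : (fun k => d k * w ^ (2 * k)) = fun k => w ^ 2 * (d k * w ^ (2 * k - 2)) := by
      funext k
      rcases k with _ | m
      · simp [hd0]
      · rw [show 2 * (m + 1) = 2 * m + 2 by omega, show 2 * m + 2 - 2 = 2 * m by omega]
        ring
    rw [hterm]
    exact hF2.mul_left (w ^ 2)
  have hshift : HasSum (fun k => d (k + 1) * w ^ (2 * k)) (bSeriesDeriv2 w) := by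
    have hexp : ∀ k, 2 * (k + 1) - 2 = 2 * k := fun k => by omega
    simpa only [hexp] using (hasSum_nat_add_iff (f := fun k => d k * w ^ (2 * k - 2)) 1).mpr
      (by simpa [hd0] using hF2)
  have hterm : ∀ k, d k * w ^ (2 * k) - 3 * (d (k + 1) * w ^ (2 * k)) =
      6 * ((bSeq k : ℂ) * w ^ (2 * k)) := fun k => by
    have hrec := congrArg ofReal (bSeq_recurrence k)
    push_cast at hrec
    simp only [hd]
    push_cast
    linear_combination w ^ (2 * k) * hrec
  have hsum := (hw2F2.sub (hshift.mul_left 3)).unique (by simpa only [hterm] using hF.mul_left 6)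
  linear_combination hsum

end Series

section Wirtinger

lemma dbar_eq_of_hasFDerivAt {f : ℂ → ℂ} {L : ℂ →L[ℝ] ℂ} {z : ℂ} (hf : HasFDerivAt f L z) :
    dbar f z = 2⁻¹ * (L 1 + I * L I) := by
  rw [dbar, hf.fderiv]

lemma Filter.EventuallyEq.dbar_eq {f g : ℂ → ℂ} {z : ℂ} (h : f =ᶠ[𝓝 z] g) :
    dbar f z = dbar g z := by
  rw [dbar, dbar, h.fderiv_eq]

lemma hasFDerivAt_mul_conj (z : ℂ) :
    HasFDerivAt (fun w => w * conj w)
      (z • (conjCLE : ℂ →L[ℝ] ℂ) + conj z • ContinuousLinearMap.id ℝ ℂ) z :=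
  (hasFDerivAt_id z).fun_mul conjCLE.hasFDerivAt

lemma dbar_comp_mul_conj {f : ℂ → ℂ} {f' z : ℂ} (hf : HasDerivAt f f' (z * conj z)) :
    dbar (fun w => f (w * conj w)) z = z * f' := by
  rw [dbar_eq_of_hasFDerivAt (f := fun w => f (w * conj w))
    (hf.comp_hasFDerivAt z (hasFDerivAt_mul_conj z))]
  simp only [smul_apply, add_apply, ContinuousLinearMap.id_apply, ContinuousLinearEquiv.coe_coe,
    conjCLE_apply, conj_I, map_one, smul_eq_mul]
  linear_combination (-f' * z + f' * conj z) * 2⁻¹ * I_sq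

lemma dbar_id_mul {g : ℂ → ℂ} {z : ℂ} (hg : DifferentiableAt ℝ g z) :
    dbar (fun w => w * g w) z = z * dbar g z := by
  rw [dbar_eq_of_hasFDerivAt (f := fun w => w * g w)
    ((hasFDerivAt_id z).fun_mul hg.hasFDerivAt), dbar]
  simp only [add_apply, smul_apply, ContinuousLinearMap.id_apply, id_eq, smul_eq_mul]
  linear_combination g z * 2⁻¹ * I_sq

end Wirtinger

lemma norm_mul_conj_lt_one {z : ℂ} (hz : ‖z‖ < 1) : ‖z * conj z‖ < 1 := by
  rw [norm_mul, RCLike.norm_conj]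
  nlinarith [norm_nonneg z]

lemma psiTwo_term_eq (z : ℂ) (k : ℕ) :
    (bSeq k : ℂ) * z ^ (2 * k) * conj z ^ (2 * k) = (bSeq k : ℂ) * (z * conj z) ^ (2 * k) := by
  rw [mul_pow, mul_assoc]

lemma psiTwo_eq_bSeries_comp : psiTwo = fun z => bSeries (z * conj z) :=
  funext fun z => tsum_congr fun k => psiTwo_term_eq z k

lemma dbar_psiTwo {z : ℂ} (hz : ‖z‖ < 1) : dbar psiTwo z = z * bSeriesDeriv (z * conj z) := by
  rw [psiTwo_eq_bSeries_comp]
  exact dbar_comp_mul_conj (hasDerivAt_bSeries (norm_mul_conj_lt_one hz))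

lemma dbar_dbar_psiTwo {z : ℂ} (hz : ‖z‖ < 1) :
    dbar (dbar psiTwo) z = z ^ 2 * bSeriesDeriv2 (z * conj z) := by
  have hev : dbar psiTwo =ᶠ[𝓝 z] fun w => w * bSeriesDeriv (w * conj w) := by
    filter_upwards [Metric.isOpen_ball.mem_nhds (mem_ball_zero_iff.mpr hz)] with w hw
    exact dbar_psiTwo (mem_ball_zero_iff.mp hw)
  have hD := hasDerivAt_bSeriesDeriv (norm_mul_conj_lt_one hz)
  have hdiff : DifferentiableAt ℝ (fun w => bSeriesDeriv (w * conj w)) z :=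
    (hD.comp_hasFDerivAt z (hasFDerivAt_mul_conj z) :).differentiableAt
  rw [hev.dbar_eq, dbar_id_mul hdiff, dbar_comp_mul_conj hD]
  ring

/-- **The second particular solution.**  The series defining
`ψ₂(ζ) = ∑ b_k ζ^{2k} ζ̄^{2k}` converges on the unit disc and `ψ₂` satisfies
`∂²ψ₂/∂ζ̄² = (6ζ²/(ζ²ζ̄² - 3)) ψ₂` there. -/
theorem psi_two_solves :
    ∀ ζ ∈ Metric.ball (0 : ℂ) 1,
      (Summable fun k : ℕ => (bSeq k : ℂ) * ζ ^ (2 * k) * (starRingEnd ℂ ζ) ^ (2 * k)) ∧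
      dbar (dbar psiTwo) ζ =
        (6 * ζ ^ 2 / (ζ ^ 2 * (starRingEnd ℂ ζ) ^ 2 - 3)) * psiTwo ζ := by
  intro ζ hζ
  have hN : ‖ζ * conj ζ‖ < 1 := norm_mul_conj_lt_one (mem_ball_zero_iff.mp hζ)
  refine ⟨?_, ?_⟩
  · simpa only [psiTwo_term_eq] using
      summable_mul_pow_of_summable_norm summable_norm_bSeq (2 * ·) hN.le
  · have hne : (ζ * conj ζ) ^ 2 - 3 ≠ 0 := by
      intro h
      have h3 : ‖(ζ * conj ζ) ^ 2‖ = 3 := by rw [sub_eq_zero.mp h]; norm_num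
      rw [norm_pow] at h3
      nlinarith [norm_nonneg (ζ * conj ζ)]
    rw [dbar_dbar_psiTwo (mem_ball_zero_iff.mp hζ), psiTwo_eq_bSeries_comp, ← mul_pow,
      div_mul_eq_mul_div, eq_div_iff hne]
    linear_combination ζ ^ 2 * bSeries_ode hN
end
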